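/- Let L be an embedded polygonal arc in ℝ³ with vertices p₀, …, p_n (n ≥ 1) and edges eᵢ = [p_{i−1}, pᵢ], and let u be a unit vector such that: (a) for every i, pᵢ − p_{i−1} does not lie in the span of u; and (b) for any two distinct edge lines ℓᵢ, ℓⱼ (the 1-dimensional affine subspaces through p_{i−1}, pᵢ and through p_{j−1}, pⱼ) that are coplanar, u does not lie in the direction space of the 2-dimensional affine subspace containing them. Then the set of points of the plane having at least two preimages in L under the orthogonal projection π_u is finite. (Used in the proof of Lemma 2.1: the projection image λ_u(L) has only finitely many crossing points.) -/

import Mathlib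

open Module Set

local notation "E3" => EuclideanSpace ℝ (Fin 3)

/-- The orthogonal projection of ℝ³ onto the orthogonal complement of the span of `u`. -/
noncomputable def projAlong (u : E3) : E3 →L[ℝ] ↥((ℝ ∙ u)ᗮ) :=
  Submodule.orthogonalProjectionOnto ((ℝ ∙ u)ᗮ)

/-!
Two preimages `x ≠ y` of a point, with `x ∈ eᵢ` and `y ∈ eⱼ`, form a chord `x - y ∥ u` between
the edge lines `ℓᵢ` and `ℓⱼ`. For fixed `i, j` the end `x` of such a chord is unique: if `ℓᵢ = ℓⱼ`
a chord would make `ℓᵢ` parallel to `u`; two chords with a common end on `ℓⱼ` would make `ℓᵢ`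
parallel to `u`; and two chords with distinct ends on `ℓⱼ` place `ℓⱼ` in the plane through `ℓᵢ`
spanned by `u`, which (b) forbids. So each of the finitely many pairs `(i, j)` yields at most one
crossing point.
-/

open AffineSubspace

section Chords

variable {k V P : Type*} [Field k] [AddCommGroup V] [Module k V] [AddTorsor V P]

theorem eq_of_mem_affineSpan_pair_of_vsub_mem_span {a b x y : P} {u : V}
    (hab : b -ᵥ a ∉ k ∙ u) (hx : x ∈ line[k, a, b]) (hy : y ∈ line[k, a, b])
    (hxy : x -ᵥ y ∈ k ∙ u) : x = y := by
  have hdir : x -ᵥ y ∈ k ∙ (b -ᵥ a) := by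
    rw [← vectorSpan_pair_rev, ← direction_affineSpan]
    exact vsub_mem_direction hx hy
  have hdisj := Submodule.disjoint_span_singleton_of_notMem hab
  exact vsub_eq_zero_iff_eq.1 (Submodule.disjoint_def.1 hdisj _ hxy hdir)

theorem exists_plane_of_vsub_mem_span {a b c d x x' y y' : P} {u : V}
    (hab : b -ᵥ a ∉ k ∙ u) (hu : u ≠ 0)
    (hx : x ∈ line[k, a, b]) (hx' : x' ∈ line[k, a, b])
    (hy : y ∈ line[k, c, d]) (hy' : y' ∈ line[k, c, d])
    (hxy : x -ᵥ y ∈ k ∙ u) (hxy' : x' -ᵥ y' ∈ k ∙ u) (hyy' : y ≠ y') :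
    ∃ Q : AffineSubspace k P, finrank k Q.direction = 2 ∧
      line[k, a, b] ≤ Q ∧ line[k, c, d] ≤ Q ∧ u ∈ Q.direction := by
  set Q := mk' a (k ∙ (b -ᵥ a) ⊔ k ∙ u)
  have hu_le : k ∙ u ≤ Q.direction := by rw [direction_mk']; exact le_sup_right
  have hline_le : line[k, a, b] ≤ Q := by
    rw [← mk'_eq (left_mem_affineSpan_pair k a b), direction_affineSpan, vectorSpan_pair_rev,
      mk'_le_mk'_iff]
    exact le_sup_left
  have hmem : ∀ {z w : P}, z ∈ line[k, a, b] → z -ᵥ w ∈ k ∙ u → w ∈ Q := fun {z w} hz hzw ↦ by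
    rw [← vsub_vadd w z, ← neg_vsub_eq_vsub_rev]
    exact vadd_mem_of_mem_direction (hu_le (neg_mem hzw)) (hline_le hz)
  have hab0 : b -ᵥ a ≠ 0 := fun h ↦ hab (by rw [h]; exact zero_mem _)
  have hdisj := (Submodule.disjoint_span_singleton_of_notMem hab).symm
  refine ⟨Q, ?_, hline_le, ?_, hu_le (Submodule.mem_span_singleton_self u)⟩
  · have := Submodule.finrank_sup_add_finrank_inf_eq (k ∙ (b -ᵥ a)) (k ∙ u)
    rw [hdisj.eq_bot, finrank_bot, finrank_span_singleton hab0, finrank_span_singleton hu] at this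
    rw [direction_mk']
    omega
  · rw [← affineSpan_pair_eq_of_mem_of_mem_of_ne hy hy' hyy']
    exact affineSpan_pair_le_of_mem_of_mem (hmem hx hxy) (hmem hx' hxy')

theorem eq_of_vsub_mem_span_of_vsub_mem_span {a b c d x x' y y' : P} {u : V}
    (hab : b -ᵥ a ∉ k ∙ u)
    (hplane : line[k, a, b] ≠ line[k, c, d] → ∀ Q : AffineSubspace k P,
      finrank k Q.direction = 2 → line[k, a, b] ≤ Q → line[k, c, d] ≤ Q → u ∉ Q.direction)
    (hx : x ∈ line[k, a, b]) (hx' : x' ∈ line[k, a, b])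
    (hy : y ∈ line[k, c, d]) (hy' : y' ∈ line[k, c, d])
    (hxy : x -ᵥ y ∈ k ∙ u) (hxy' : x' -ᵥ y' ∈ k ∙ u) (hne : x ≠ y) : x = x' := by
  by_cases hlines : line[k, a, b] = line[k, c, d]
  · exact absurd (eq_of_mem_affineSpan_pair_of_vsub_mem_span hab hx (hlines ▸ hy) hxy) hne
  by_cases hyy' : y = y'
  · subst hyy'
    refine eq_of_mem_affineSpan_pair_of_vsub_mem_span hab hx hx' ?_
    rw [← vsub_sub_vsub_cancel_right x x' y]
    exact sub_mem hxy hxy'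
  have hu : u ≠ 0 := by
    rintro rfl
    exact hne (vsub_eq_zero_iff_eq.1 (by simpa using hxy))
  obtain ⟨Q, hQ, haQ, hcQ, huQ⟩ := exists_plane_of_vsub_mem_span hab hu hx hx' hy hy' hxy hxy' hyy'
  exact absurd huQ (hplane hlines Q hQ haQ hcQ)

end Chords

theorem segment_subset_affineSpan_pair {𝕜 E : Type*} [Ring 𝕜] [PartialOrder 𝕜] [IsOrderedRing 𝕜]
    [AddCommGroup E] [Module 𝕜 E] (a b : E) : segment 𝕜 a b ⊆ line[𝕜, a, b] := by
  rw [← convexHull_pair]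
  exact convexHull_subset_affineSpan _

theorem finite_setOf_two_le_encard_fiber {ι α β : Type*} [Finite ι] (S : ι → Set α) (f : α → β)
    (h : ∀ i j, ∀ x ∈ S i, ∀ x' ∈ S i, ∀ y ∈ S j, ∀ y' ∈ S j,
      x ≠ y → f x = f y → f x' = f y' → x = x') :
    {q | 2 ≤ {x ∈ ⋃ i, S i | f x = q}.encard}.Finite := by
  let doubles : ι × ι → Set β := fun ij ↦
    {q | ∃ x ∈ S ij.1, ∃ y ∈ S ij.2, x ≠ y ∧ f x = q ∧ f y = q}
  refine (Set.finite_iUnion (f := doubles) fun ij ↦ Set.Subsingleton.finite ?_).subset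
    fun q hq ↦ ?_
  · rintro _ ⟨x, hx, y, hy, hxy, rfl, hyq⟩ _ ⟨x', hx', y', hy', -, rfl, hyq'⟩
    rw [h ij.1 ij.2 x hx x' hx' y hy y' hy' hxy hyq.symm hyq'.symm]
  · obtain ⟨x, y, ⟨hx, rfl⟩, ⟨hy, hyq⟩, hxy⟩ :=
      Set.one_lt_encard_iff.1 (lt_of_lt_of_le (by norm_num) hq)
    obtain ⟨i, hxi⟩ := Set.mem_iUnion.1 hx
    obtain ⟨j, hyj⟩ := Set.mem_iUnion.1 hy
    exact Set.mem_iUnion.2 ⟨(i, j), x, hxi, y, hyj, hxy, rfl, hyq⟩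

theorem projAlong_eq_projAlong_iff (u x y : E3) :
    projAlong u x = projAlong u y ↔ x - y ∈ ℝ ∙ u := by
  rw [← sub_eq_zero, ← map_sub, projAlong, Submodule.orthogonalProjectionOnto_eq_zero_iff,
    Submodule.orthogonal_orthogonal]

theorem finitely_many_crossing_points_general
    (n : ℕ) (p : Fin (n + 1) → E3)
    (u : E3)
    -- (a) `u` is not parallel to any edge
    (ha : ∀ i : Fin n, p i.succ - p i.castSucc ∉ (ℝ ∙ u : Submodule ℝ E3))
    -- (b) for two distinct coplanar edge lines, `u` is not in the direction of the plane
    -- containing them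
    (hb : ∀ i j : Fin n,
      affineSpan ℝ {p i.castSucc, p i.succ} ≠ affineSpan ℝ {p j.castSucc, p j.succ} →
      ∀ Q : AffineSubspace ℝ E3, finrank ℝ Q.direction = 2 →
        affineSpan ℝ {p i.castSucc, p i.succ} ≤ Q →
        affineSpan ℝ {p j.castSucc, p j.succ} ≤ Q →
        u ∉ Q.direction) :
    {q : ↥((ℝ ∙ u)ᗮ) |
      2 ≤ Set.encard {x ∈ ⋃ i : Fin n, segment ℝ (p i.castSucc) (p i.succ) |
        projAlong u x = q}}.Finite := by
  refine finite_setOf_two_le_encard_fiber (fun i : Fin n ↦ segment ℝ (p i.castSucc) (p i.succ))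
    (projAlong u) fun i j x hx x' hx' y hy y' hy' hne hxy hxy' ↦ ?_
  rw [projAlong_eq_projAlong_iff] at hxy hxy'
  exact eq_of_vsub_mem_span_of_vsub_mem_span (ha i) (hb i j)
    (segment_subset_affineSpan_pair _ _ hx) (segment_subset_affineSpan_pair _ _ hx')
    (segment_subset_affineSpan_pair _ _ hy) (segment_subset_affineSpan_pair _ _ hy') hxy hxy' hne

/-- If the unit vector `u` is not parallel to any edge of the embedded polygonal arc `L`
and, for any two distinct coplanar edge lines, `u` is not in the direction of the plane
containing them, then the projection image `π_u(L)` has only finitely many multiple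
points. -/
theorem finitely_many_crossing_points
    (n : ℕ) (hn : 1 ≤ n) (p : Fin (n + 1) → E3)
    (hpe : ∀ i : Fin n, p i.castSucc ≠ p i.succ)
    (hemb : ∀ i j : Fin n, (i : ℕ) < (j : ℕ) →
      (((j : ℕ) = (i : ℕ) + 1 →
          segment ℝ (p i.castSucc) (p i.succ) ∩ segment ℝ (p j.castSucc) (p j.succ)
            = {p i.succ}) ∧
        ((j : ℕ) ≠ (i : ℕ) + 1 →
          segment ℝ (p i.castSucc) (p i.succ) ∩ segment ℝ (p j.castSucc) (p j.succ)
            = ∅)))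
    (u : E3) (hu : ‖u‖ = 1)
    -- (a) `u` is not parallel to any edge
    (ha : ∀ i : Fin n, p i.succ - p i.castSucc ∉ (ℝ ∙ u : Submodule ℝ E3))
    -- (b) for two distinct coplanar edge lines, `u` is not in the direction of the plane
    -- containing them
    (hb : ∀ i j : Fin n,
      affineSpan ℝ {p i.castSucc, p i.succ} ≠ affineSpan ℝ {p j.castSucc, p j.succ} →
      ∀ Q : AffineSubspace ℝ E3, finrank ℝ Q.direction = 2 →
        affineSpan ℝ {p i.castSucc, p i.succ} ≤ Q →
        affineSpan ℝ {p j.castSucc, p j.succ} ≤ Q →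
        u ∉ Q.direction) :
    {q : ↥((ℝ ∙ u)ᗮ) |
      2 ≤ Set.encard {x ∈ ⋃ i : Fin n, segment ℝ (p i.castSucc) (p i.succ) |
        projAlong u x = q}}.Finite :=
  finitely_many_crossing_points_general n p u ha hb
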